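/- arXiv:1010.1378 — 2 statements merged into one kernel-verified Lean document; each statement's English description precedes it below -/
import Mathlib

section
/- Let F9 be a finite field with 9 elements and let G = PGL_2(9) be the quotient of the general linear group GL_2(F9) by its center. Every element x of order 3 in G has centralizer C_G(x) isomorphic to C3 × C3. -/
/-!
Lift `x` to `A ∈ GL₂(F)`. As `F` is perfect of characteristic `p = 3`, the scalar `A ^ p` is a
`p`-th power of a scalar, so `A` can be rescaled to `A ^ p = 1`, i.e. `(A - 1) ^ p = 0`: then
`A = 1 + N` with `N ≠ 0` and `N ^ 2 = 0`. If the class of `B` centralizes `x`, then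
`B A B⁻¹ = c • A`, and `c • A - 1`, being conjugate to `N`, is nilpotent, which forces `c = 1`.
So `B` commutes with `N`, hence `B = α • (1 + β • N)`, and the centralizer is the image of
`b ↦ 1 + b • N`, a copy of `(F, +) ≅ C₃ × C₃`.
-/

open Matrix

local notation "PGL(" n ", " K ")" => GL n K ⧸ Subgroup.center (GL n K)

section Unipotent

variable {K R : Type*} [CommRing K] [Ring R] [Algebra K R] {N : R}

lemma one_add_smul_mul_one_add_smul (hN : N * N = 0) (a b : K) :
    (1 + a • N) * (1 + b • N) = 1 + (a + b) • N := by
  simp only [mul_add, add_mul, one_mul, mul_one, smul_mul_smul_comm, hN, smul_zero, add_smul]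
  abel

def unipotentHom (hN : N * N = 0) : Multiplicative K →* Rˣ where
  toFun b := ⟨1 + b.toAdd • N, 1 + (-b.toAdd) • N,
    by rw [one_add_smul_mul_one_add_smul hN, add_neg_cancel, zero_smul, add_zero],
    by rw [one_add_smul_mul_one_add_smul hN, neg_add_cancel, zero_smul, add_zero]⟩
  map_one' := Units.ext (by simp)
  map_mul' a b := Units.ext (by simp [one_add_smul_mul_one_add_smul hN])

@[simp]
lemma val_unipotentHom (hN : N * N = 0) (b : Multiplicative K) :
    (unipotentHom hN b : R) = 1 + b.toAdd • N :=
  rfl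

end Unipotent

lemma isNilpotent_sub_one_of_pow_char_eq_one {R : Type*} [Ring R] (p : ℕ) [Fact p.Prime]
    [CharP R p] {A : R} (hA : A ^ p = 1) : IsNilpotent (A - 1) :=
  ⟨p, by rw [sub_pow_char_of_commute p (Commute.one_right A), hA, one_pow, sub_self]⟩

lemma eq_one_of_isNilpotent_smul_sub_one {K R : Type*} [Field K] [Ring R] [Nontrivial R]
    [Algebra K R] {A : R} (hA : IsNilpotent (A - 1)) {c : K} (hc : IsNilpotent (c • A - 1)) :
    c = 1 := by
  by_contra h
  have hsplit : c • A - 1 = algebraMap K R (c - 1) + c • (A - 1) := by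
    rw [Algebra.algebraMap_eq_smul_one, sub_smul, smul_sub, one_smul]
    abel
  refine hc.not_isUnit ?_
  rw [hsplit]
  exact (hA.smul c).isUnit_add_left_of_commute ((sub_ne_zero.mpr h).isUnit.map _)
    (Algebra.commutes _ _).symm

theorem QuotientGroup.exists_mk_eq_and_pow_eq_one {G : Type*} [Group G] {Z : Subgroup G}
    [Z.Normal] (hZ : Z ≤ Subgroup.center G) {n : ℕ} (hroot : ∀ z ∈ Z, ∃ w ∈ Z, w ^ n = z)
    {x : G ⧸ Z} (hx : x ^ n = 1) : ∃ g : G, (g : G ⧸ Z) = x ∧ g ^ n = 1 := by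
  obtain ⟨g, rfl⟩ := QuotientGroup.mk_surjective x
  obtain ⟨w, hwZ, hw⟩ :=
    hroot (g ^ n) (by rwa [← QuotientGroup.mk_pow, QuotientGroup.eq_one_iff] at hx)
  have hcomm : Commute w⁻¹ g := Commute.inv_left (Subgroup.mem_center_iff.mp (hZ hwZ) g).symm
  refine ⟨w⁻¹ * g, ?_, ?_⟩
  · rw [QuotientGroup.mk_mul, (QuotientGroup.eq_one_iff _).mpr (inv_mem hwZ), one_mul]
  · rw [hcomm.mul_pow, inv_pow, hw, inv_mul_cancel]

theorem Matrix.pow_card_eq_zero_of_isNilpotent {R n : Type*} [CommRing R] [IsDomain R]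
    [Fintype n] [DecidableEq n] {M : Matrix n n R} (hM : IsNilpotent M) :
    M ^ Fintype.card n = 0 := by
  have hchar : M.charpoly = Polynomial.X ^ Fintype.card n :=
    sub_eq_zero.mp (isNilpotent_charpoly_sub_pow_of_isNilpotent hM).eq_zero
  simpa [hchar] using aeval_self_charpoly M

theorem Matrix.eq_smul_one_add_smul_iff_fin_two {K : Type*} [CommRing K]
    {B N : Matrix (Fin 2) (Fin 2) K} {α β : K} :
    B = α • 1 + β • N ↔ B 0 0 = α + β * N 0 0 ∧ B 0 1 = β * N 0 1 ∧ B 1 0 = β * N 1 0 ∧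
      B 1 1 = α + β * N 1 1 := by
  rw [← Matrix.ext_iff]
  simp [Fin.forall_fin_two, and_assoc]

theorem Matrix.exists_eq_smul_one_add_smul_of_commute {K : Type*} [Field K]
    {N B : Matrix (Fin 2) (Fin 2) K} (hN : IsNilpotent N) (hN0 : N ≠ 0) (hB : Commute B N) :
    ∃ α β : K, B = α • 1 + β • N := by
  have htr : N 1 1 = -N 0 0 := by
    have := (isNilpotent_trace_of_isNilpotent hN).eq_zero
    rw [trace_fin_two] at this
    linear_combination this
  have hdet : N 0 1 * N 1 0 = -(N 0 0 * N 0 0) := by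
    have hsq : N ^ 2 = 0 := by simpa using pow_card_eq_zero_of_isNilpotent hN
    have := congrArg det hsq
    rw [det_pow, det_zero, pow_eq_zero_iff two_ne_zero, det_fin_two, htr] at this
    linear_combination -this
  have e00 := congrFun (congrFun hB.eq 0) 0
  have e01 := congrFun (congrFun hB.eq 0) 1
  have e10 := congrFun (congrFun hB.eq 1) 0
  have e11 := congrFun (congrFun hB.eq 1) 1
  simp only [mul_apply, Fin.sum_univ_two, htr] at e00 e01 e10 e11
  by_cases hb : N 0 1 = 0
  · have ha : N 0 0 = 0 := mul_self_eq_zero.mp (by rw [hb] at hdet; linear_combination hdet)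
    have hc : N 1 0 ≠ 0 := by
      intro hc
      apply hN0
      ext i j; fin_cases i <;> fin_cases j <;> simp [ha, hb, hc, htr]
    have hq : B 0 1 = 0 := by
      refine (mul_eq_zero.mp ?_).resolve_left hc
      rw [ha, hb] at e11
      linear_combination -e11
    have hs : B 1 1 = B 0 0 := mul_right_cancel₀ hc (by rw [ha] at e10; linear_combination e10)
    refine ⟨B 0 0, B 1 0 / N 1 0, eq_smul_one_add_smul_iff_fin_two.mpr
      ⟨by rw [ha, mul_zero, add_zero], by rw [hq, hb, mul_zero], by field_simp,
        by rw [hs, htr, ha, neg_zero, mul_zero, add_zero]⟩⟩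
  · refine ⟨B 0 0 - B 0 1 / N 0 1 * N 0 0, B 0 1 / N 0 1, eq_smul_one_add_smul_iff_fin_two.mpr
      ⟨by ring, by field_simp, ?_, ?_⟩⟩
    · field_simp
      linear_combination -e00
    · rw [htr]
      field_simp
      linear_combination -e01

namespace Matrix.GeneralLinearGroup

variable {n K : Type*} [Fintype n] [DecidableEq n] [Field K]

def unipotentPGL {N : Matrix n n K} (hN : N * N = 0) : Multiplicative K →* PGL(n, K) :=
  (QuotientGroup.mk' _).comp (unipotentHom hN)

theorem exists_pow_eq_of_mem_center (p : ℕ) [ExpChar K p] [PerfectRing K p] {z : GL n K}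
    (hz : z ∈ Subgroup.center (GL n K)) : ∃ w ∈ Subgroup.center (GL n K), w ^ p = z := by
  rw [center_eq_range_scalar] at hz ⊢
  obtain ⟨u, rfl⟩ := hz
  obtain ⟨v, hv⟩ := surjective_frobenius K p u
  have hv0 : v ≠ 0 := by
    rintro rfl
    exact u.ne_zero (by simpa [zero_pow (expChar_pos K p).ne'] using hv.symm)
  refine ⟨scalar n (Units.mk0 v hv0), ⟨_, rfl⟩, ?_⟩
  rw [← map_pow]
  congr 1
  exact Units.ext hv

theorem commute_of_mk_mem_centralizer [Nonempty n] {A B : GL n K}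
    (hA : IsNilpotent ((A : Matrix n n K) - 1))
    (hB : (B : PGL(n, K)) ∈ Subgroup.centralizer {(A : PGL(n, K))}) : Commute B A := by
  have hconj : ((B * A * B⁻¹ : GL n K) : PGL(n, K)) = A := by
    rw [QuotientGroup.mk_mul, QuotientGroup.mk_mul, Subgroup.mem_centralizer_singleton_iff.mp hB,
      QuotientGroup.mk_inv, mul_inv_cancel_right]
  obtain ⟨c, hc⟩ : A⁻¹ * (B * A * B⁻¹) ∈ (scalar n).range := by
    rw [← center_eq_range_scalar]
    exact QuotientGroup.eq.mp hconj.symm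
  have hcA : B * A * B⁻¹ = A * scalar n c := by rw [hc, mul_inv_cancel_left]
  have hc1 : c = 1 := by
    refine Units.ext (eq_one_of_isNilpotent_smul_sub_one hA ?_)
    have hconjN : (c : K) • (A : Matrix n n K) - 1 = B * ((A : Matrix n n K) - 1) * B⁻¹ := by
      have := congrArg Units.val hcA
      simp only [Units.val_mul] at this
      rw [mul_sub, sub_mul, this, mul_one, Units.mul_inv]
      ext i j
      simp [mul_comm]
    obtain ⟨k, hk⟩ := hA
    exact ⟨k, by rw [hconjN, Units.conj_pow, hk, mul_zero, zero_mul]⟩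
  rw [hc1, map_one, mul_one] at hcA
  exact mul_inv_eq_iff_eq_mul.mp hcA

theorem injective_unipotentPGL [Nonempty n] {N : Matrix n n K} (hN : N * N = 0) (hN0 : N ≠ 0) :
    Function.Injective (unipotentPGL (K := K) hN) := by
  refine (injective_iff_map_eq_one _).mpr fun b hb => ?_
  obtain ⟨e, he⟩ := mem_center_iff_val_mem_range_scalar.mp ((QuotientGroup.eq_one_iff _).mp hb)
  have hbN : b.toAdd • N = Matrix.scalar n (e - 1) := by
    rw [map_sub, he, map_one, val_unipotentHom, add_sub_cancel_left]
  have he1 : e - 1 = 0 := by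
    refine pow_eq_zero_iff two_ne_zero |>.mp ((Matrix.scalar_inj (n := n)).mp ?_)
    rw [map_pow, ← hbN, sq, smul_mul_smul_comm, hN, smul_zero, map_zero]
  rw [he1, map_zero] at hbN
  exact toAdd_eq_zero.mp ((smul_eq_zero.mp hbN).resolve_right hN0)

theorem mk_mem_range_of_commute {N : Matrix (Fin 2) (Fin 2) K} (hN : N * N = 0) (hN0 : N ≠ 0)
    {B : GL (Fin 2) K} (hB : Commute (B : Matrix (Fin 2) (Fin 2) K) N) :
    (B : PGL(Fin 2, K)) ∈ (unipotentPGL hN).range := by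
  have hNnil : IsNilpotent N := ⟨2, by rw [sq, hN]⟩
  obtain ⟨α, β, hαβ⟩ := exists_eq_smul_one_add_smul_of_commute hNnil hN0 hB
  have hα : α ≠ 0 := by
    rintro rfl
    refine B.isUnit.not_isNilpotent ?_
    rw [hαβ, zero_smul, zero_add]
    exact hNnil.smul β
  have hBdecomp : B = scalar (Fin 2) (Units.mk0 α hα) * unipotentHom hN (.ofAdd (β / α)) := by
    ext : 1
    rw [hαβ]
    simp only [Units.val_mul, val_unipotentHom, toAdd_ofAdd]
    rw [coe_scalar, Units.val_mk0, scalar_apply, ← smul_one_eq_diagonal, smul_mul, one_mul,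
      smul_add, smul_smul, mul_div_cancel₀ _ hα]
  have hscalar : (scalar (Fin 2) (Units.mk0 α hα) : PGL(Fin 2, K)) = 1 :=
    (QuotientGroup.eq_one_iff _).mpr (by rw [center_eq_range_scalar]; exact ⟨_, rfl⟩)
  refine ⟨.ofAdd (β / α), ?_⟩
  rw [hBdecomp, QuotientGroup.mk_mul, hscalar, one_mul]
  rfl

theorem centralizer_mk_eq_range {A : GL (Fin 2) K}
    (hN : ((A : Matrix (Fin 2) (Fin 2) K) - 1) * (A - 1) = 0)
    (hN0 : (A : Matrix (Fin 2) (Fin 2) K) - 1 ≠ 0) :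
    Subgroup.centralizer {(A : PGL(Fin 2, K))} = (unipotentPGL hN).range := by
  ext y
  constructor
  · intro hy
    obtain ⟨B, rfl⟩ := QuotientGroup.mk_surjective y
    have hBA := commute_of_mk_mem_centralizer ⟨2, by rw [sq, hN]⟩ hy
    exact mk_mem_range_of_commute hN hN0 (hBA.units_val.sub_right (Commute.one_right _))
  · rintro ⟨b, rfl⟩
    have hA : (A : PGL(Fin 2, K)) = unipotentPGL hN (.ofAdd 1) :=
      congrArg _ (Units.ext (by rw [val_unipotentHom, toAdd_ofAdd, one_smul, add_sub_cancel]))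
    rw [Subgroup.mem_centralizer_singleton_iff, hA, ← map_mul, ← map_mul, mul_comm]

theorem nonempty_centralizer_mulEquiv_of_orderOf_eq_char (p : ℕ) [Fact p.Prime] [CharP K p]
    [PerfectRing K p] {x : PGL(Fin 2, K)} (hx : orderOf x = p) :
    Nonempty (Subgroup.centralizer {x} ≃* Multiplicative K) := by
  obtain ⟨A, rfl, hA⟩ := QuotientGroup.exists_mk_eq_and_pow_eq_one le_rfl
    (fun _ => exists_pow_eq_of_mem_center p) (hx ▸ pow_orderOf_eq_one x)
  have hN : IsNilpotent ((A : Matrix (Fin 2) (Fin 2) K) - 1) :=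
    isNilpotent_sub_one_of_pow_char_eq_one p
      (by rw [← Units.val_pow_eq_pow_val, hA, Units.val_one])
  have hNN : ((A : Matrix (Fin 2) (Fin 2) K) - 1) * (A - 1) = 0 := by
    simpa [sq] using pow_card_eq_zero_of_isNilpotent hN
  have hN0 : (A : Matrix (Fin 2) (Fin 2) K) - 1 ≠ 0 := by
    intro h
    rw [show A = 1 from Units.ext (sub_eq_zero.mp h), QuotientGroup.mk_one, orderOf_one] at hx
    exact (Fact.out : p.Prime).one_lt.ne hx
  exact ⟨((MonoidHom.ofInjective (injective_unipotentPGL hNN hN0)).trans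
    (MulEquiv.subgroupCongr (centralizer_mk_eq_range hNN hN0).symm)).symm⟩

end Matrix.GeneralLinearGroup

theorem FiniteField.nonempty_addEquiv_zmod_prod {F : Type*} [Field F] [Fintype F] {p : ℕ}
    [Fact p.Prime] (hF : Fintype.card F = p ^ 2) : Nonempty (F ≃+ ZMod p × ZMod p) := by
  have := charP_of_card_eq_prime_pow hF
  let _ := ZMod.algebra F p
  have hrank : Module.finrank (ZMod p) F = Module.finrank (ZMod p) (ZMod p × ZMod p) := by
    rw [Module.finrank_prod, Module.finrank_self]
    have hcard := Module.card_eq_pow_finrank (K := ZMod p) (V := F)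
    rw [hF, ZMod.card] at hcard
    exact (Nat.pow_right_injective (Fact.out : p.Prime).two_le hcard).symm
  exact ⟨(LinearEquiv.ofFinrankEq F _ hrank).toAddEquiv⟩

/-- Every element of order 3 in `PGL₂(F₉)` (the quotient of `GL₂(F₉)` by its center)
has centralizer isomorphic to `C₃ × C₃`. -/
theorem stmt_6 (F : Type) [Field F] [Fintype F] (hF : Fintype.card F = 9)
    (x : Matrix.GeneralLinearGroup (Fin 2) F ⧸
      Subgroup.center (Matrix.GeneralLinearGroup (Fin 2) F))
    (hx : orderOf x = 3) :
    Nonempty (↥(Subgroup.centralizer {x}) ≃*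
      Multiplicative (ZMod 3) × Multiplicative (ZMod 3)) := by
  have hF' : Fintype.card F = 3 ^ 2 := hF
  have := charP_of_card_eq_prime_pow hF'
  obtain ⟨e⟩ := Matrix.GeneralLinearGroup.nonempty_centralizer_mulEquiv_of_orderOf_eq_char 3 hx
  obtain ⟨f⟩ := FiniteField.nonempty_addEquiv_zmod_prod hF'
  exact ⟨e.trans (f.toMultiplicative.trans (MulEquiv.prodMultiplicative _ _))⟩
end

section
/- Let F8 be a finite field with 8 elements, let G = SL_2(F8) (which equals PSL_2(8)), and let P be a Sylow 2-subgroup of G. Then P is elementary abelian of order 8 (isomorphic to C2 × C2 × C2), the centralizer C_G(P) equals P, and the quotient N_G(P)/P of the normalizer of P by P is cyclic of order 7. -/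
/-!
Sylow `p`-subgroups are conjugate, so everything can be read off the unipotent group `U` of
upper unitriangular matrices. Over any field `U ≅ (F, +)`, its normalizer is the Borel group `B`
of upper triangular matrices, and `B / U ≅ Fˣ` through the diagonal. In characteristic 2 the
centralizer of `U` is `U` itself, since `1 = -1` leaves no other scalar. That `U` is Sylow needs no
count of `|SL₂(F)|`: `[N(U) : U] = q - 1` is prime to `p`, and `[N(H) : H] ≡ [G : H] (mod p)` for
every `p`-subgroup `H`. For `q = 8` this gives `U ≅ C₂³` and `N(U) / U ≅ C₇`.
-/

open Subgroup MatrixGroups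

section General

variable {G : Type*} [Group G] {p : ℕ} [Fact p.Prime]

theorem IsPGroup.not_dvd_index_of_not_dvd_relIndex_normalizer [Finite G] {H : Subgroup G}
    (hH : IsPGroup p H) (h : ¬ p ∣ H.relIndex (normalizer (H : Set G))) : ¬ p ∣ H.index := by
  obtain ⟨n, hn⟩ := hH.exists_card_eq
  have := Sylow.card_quotient_normalizer_modEq_card_quotient hn
  rw [← Nat.modEq_zero_iff_dvd] at h ⊢
  exact fun hG => h (this.trans hG)

theorem Subgroup.centralizer_map_mulEquiv {G' : Type*} [Group G'] (e : G ≃* G') (H : Subgroup G) :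
    centralizer (H.map e.toMonoidHom : Set G') = (centralizer (H : Set G)).map e.toMonoidHom := by
  ext x
  obtain ⟨y, rfl⟩ := e.surjective x
  simp [mem_centralizer_iff, ← map_mul, e.injective.eq_iff]

theorem Sylow.centralizer_eq_self_of_eq [Finite (Sylow p G)] (P Q : Sylow p G)
    (hQ : centralizer ((Q : Subgroup G) : Set G) = Q) :
    centralizer ((P : Subgroup G) : Set G) = P := by
  obtain ⟨g, rfl⟩ := MulAction.exists_smul_eq G Q P
  change centralizer ((Q : Subgroup G).map (MulAut.conj g).toMonoidHom : Set G) =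
    (Q : Subgroup G).map (MulAut.conj g).toMonoidHom
  rw [Subgroup.centralizer_map_mulEquiv (MulAut.conj g), hQ]

theorem Sylow.relIndex_normalizer_eq [Finite G] (P Q : Sylow p G) :
    (P : Subgroup G).relIndex (normalizer ((P : Subgroup G) : Set G)) =
      (Q : Subgroup G).relIndex (normalizer ((Q : Subgroup G) : Set G)) := by
  have hindex : (P : Subgroup G).index = (Q : Subgroup G).index := by
    have h := (card_mul_index (P : Subgroup G)).trans (card_mul_index (Q : Subgroup G)).symm
    rwa [Nat.card_congr (P.equiv Q).toEquiv, Nat.mul_right_inj Nat.card_pos.ne'] at h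
  have hP := relIndex_mul_index (le_normalizer (H := (P : Subgroup G)))
  have hQ := relIndex_mul_index (le_normalizer (H := (Q : Subgroup G)))
  rw [Sylow.coe_coe, ← P.card_eq_index_normalizer] at hP
  rw [Sylow.coe_coe, ← Q.card_eq_index_normalizer] at hQ
  exact Nat.eq_of_mul_eq_mul_right Nat.card_pos (hP.trans (hindex.trans hQ.symm))

theorem Module.nonempty_linearEquiv_of_natCard_eq (K V W : Type*) [Field K] [Finite K]
    [AddCommGroup V] [Module K V] [Finite V] [AddCommGroup W] [Module K W] [Finite W]
    (h : Nat.card V = Nat.card W) : Nonempty (V ≃ₗ[K] W) := by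
  rw [Module.natCard_eq_pow_finrank (K := K), Module.natCard_eq_pow_finrank (K := K) (V := W)] at h
  exact ⟨LinearEquiv.ofFinrankEq V W (Nat.pow_right_injective Finite.one_lt_card h)⟩

theorem FiniteField.not_dvd_natCard_sub_one {F : Type*} [Field F] [Finite F] [CharP F p] :
    ¬ p ∣ Nat.card F - 1 := by
  have := Fintype.ofFinite F
  have hq : p ∣ Nat.card F := (CharP.cast_eq_zero_iff F p _).mp <| by
    simp [Nat.card_eq_fintype_card]
  intro h
  have h1 := Nat.dvd_sub hq h
  rw [Nat.sub_sub_self Nat.card_pos] at h1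
  exact (Fact.out : p.Prime).one_lt.ne' (Nat.dvd_one.mp h1)

end General

namespace Matrix.SpecialLinearGroup.SL2

variable {F : Type*} [Field F]

lemma mul_apply (g h : SL(2, F)) (i j : Fin 2) : (g * h) i j = g i 0 * h 0 j + g i 1 * h 1 j := by
  simp [coe_mul, Matrix.mul_apply, Fin.sum_univ_two]

lemma det_eq (g : SL(2, F)) : g 0 0 * g 1 1 - g 0 1 * g 1 0 = 1 := by
  rw [← Matrix.det_fin_two, det_coe]

lemma inv_apply (g : SL(2, F)) :
    g⁻¹ 0 0 = g 1 1 ∧ g⁻¹ 0 1 = -g 0 1 ∧ g⁻¹ 1 0 = -g 1 0 ∧ g⁻¹ 1 1 = g 0 0 := by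
  simp [SL2_inv_expl]

variable (F) in
def borel : Subgroup SL(2, F) where
  carrier := {g | g 1 0 = 0}
  one_mem' := by simp
  mul_mem' {g h} hg hh := by simp_all [mul_apply]
  inv_mem' {g} hg := by simp_all [inv_apply]

variable (F) in
def unipotent : Subgroup SL(2, F) where
  carrier := {g | g 1 0 = 0 ∧ g 0 0 = 1}
  one_mem' := by simp
  mul_mem' {g h} hg hh := by simp_all [mul_apply]
  inv_mem' {g} hg := by
    have := det_eq g
    simp_all [inv_apply]

variable {g : SL(2, F)}

@[simp] lemma mem_borel : g ∈ borel F ↔ g 1 0 = 0 := Iff.rfl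

@[simp] lemma mem_unipotent : g ∈ unipotent F ↔ g 1 0 = 0 ∧ g 0 0 = 1 := Iff.rfl

lemma apply_one_one_of_mem_unipotent (hg : g ∈ unipotent F) : g 1 1 = 1 := by
  have := det_eq g
  simp_all

lemma unipotent_le_borel : unipotent F ≤ borel F := fun _ hg => hg.1

def unipotentEquiv : unipotent F ≃* Multiplicative F where
  toFun u := .ofAdd ((u : SL(2, F)) 0 1)
  invFun x := ⟨SpecialLinearGroup.transvection zero_ne_one x.toAdd, by
    simp [transvection_coe]⟩
  left_inv u := by
    obtain ⟨u, h10, h00⟩ := u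
    ext i j
    fin_cases i <;> fin_cases j <;>
      simp [transvection_coe, h10, h00, apply_one_one_of_mem_unipotent ⟨h10, h00⟩]
  right_inv x := by simp [transvection_coe]
  map_mul' u v := by
    simp [mul_apply, u.2.2, apply_one_one_of_mem_unipotent v.2, ofAdd_add, mul_comm]

def borelToUnits : borel F →* Fˣ where
  toFun b := Units.mkOfMulEqOne ((b : SL(2, F)) 0 0) ((b : SL(2, F)) 1 1) (by
    simpa [mem_borel.mp b.2] using det_eq (b : SL(2, F)))
  map_one' := by ext; simp
  map_mul' a b := by ext; simp [mul_apply, mem_borel.mp b.2]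

lemma borelToUnits_surjective : Function.Surjective (borelToUnits (F := F)) := fun a =>
  ⟨⟨⟨!![(a : F), 0; 0, (a⁻¹ : Fˣ)], by simp⟩, rfl⟩, by ext; rfl⟩

lemma ker_borelToUnits : (borelToUnits (F := F)).ker = (unipotent F).subgroupOf (borel F) := by
  ext b
  simp [borelToUnits, Units.ext_iff, mem_subgroupOf, mem_borel.mp b.2]

instance : ((unipotent F).subgroupOf (borel F)).Normal :=
  ker_borelToUnits (F := F) ▸ MonoidHom.normal_ker _

instance : IsMulCommutative (unipotent F) :=
  ⟨⟨fun u v => unipotentEquiv.injective (by simp [mul_comm])⟩⟩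

noncomputable def borelQuotientEquivUnits : borel F ⧸ (unipotent F).subgroupOf (borel F) ≃* Fˣ :=
  (QuotientGroup.quotientMulEquivOfEq ker_borelToUnits.symm).trans
    (QuotientGroup.quotientKerEquivOfSurjective _ borelToUnits_surjective)

theorem normalizer_unipotent : normalizer (unipotent F : Set SL(2, F)) = borel F := by
  refine le_antisymm (fun g hg => ?_) (le_normalizer_of_normal_subgroupOf unipotent_le_borel)
  -- the lower-left entry of `g !![1, 1; 0, 1] g⁻¹` is `-(g 1 0)²`
  have hconj := ((mem_normalizer_iff.mp hg _).mp (unipotentEquiv.symm (.ofAdd 1)).2).1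
  simp [unipotentEquiv, mul_apply, inv_apply, transvection_coe] at hconj
  exact mul_self_eq_zero.mp (by linear_combination -hconj)

theorem centralizer_unipotent [CharP F 2] :
    centralizer (unipotent F : Set SL(2, F)) = unipotent F := by
  refine le_antisymm (fun g hg => ?_) (le_centralizer _)
  have hcomm := mem_centralizer_iff.mp hg _ (unipotentEquiv.symm (.ofAdd 1)).2
  have h10 := congr($hcomm 0 0)
  have h11 := congr($hcomm 0 1)
  simp [unipotentEquiv, mul_apply, transvection_coe] at h10 h11
  have hdet := det_eq g
  have h11' : g 1 1 = g 0 0 := by linear_combination h11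
  rw [h10, h11'] at hdet
  exact ⟨h10, CharTwo.sq_injective (by linear_combination hdet)⟩

theorem isPGroup_unipotent (p : ℕ) [CharP F p] : IsPGroup p (unipotent F) := fun u =>
  ⟨1, unipotentEquiv.injective <| by
    rw [pow_one, map_pow, map_one, ← ofAdd_toAdd (unipotentEquiv u), ← ofAdd_nsmul, nsmul_eq_mul,
      CharP.cast_eq_zero, zero_mul, ofAdd_zero]⟩

lemma relIndex_unipotent_normalizer :
    (unipotent F).relIndex (normalizer (unipotent F : Set SL(2, F))) = Nat.card F - 1 := by
  rw [normalizer_unipotent, relIndex, index, Nat.card_congr borelQuotientEquivUnits.toEquiv,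
    Nat.card_units]

noncomputable def unipotentSylow (p : ℕ) [Fact p.Prime] [Finite F] [CharP F p] :
    Sylow p SL(2, F) :=
  (isPGroup_unipotent p).toSylow <|
    (isPGroup_unipotent p).not_dvd_index_of_not_dvd_relIndex_normalizer <| by
      rw [relIndex_unipotent_normalizer]
      exact FiniteField.not_dvd_natCard_sub_one

end Matrix.SpecialLinearGroup.SL2

open Matrix.SpecialLinearGroup.SL2 in
/-- Let `F` be a field with 8 elements, `G = SL₂(F) = PSL₂(8)`, and `P` a Sylow
2-subgroup of `G`.  Then `P` is elementary abelian of order 8 (isomorphic to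
`C₂ × C₂ × C₂`), the centralizer of `P` in `G` equals `P`, and `N_G(P)/P` is cyclic of
order 7. -/
theorem stmt_16 (F : Type) [Field F] [Fintype F] (hF : Fintype.card F = 8)
    (P : Sylow 2 (Matrix.SpecialLinearGroup (Fin 2) F)) :
    Nonempty (↥(P : Subgroup (Matrix.SpecialLinearGroup (Fin 2) F)) ≃*
      Multiplicative (ZMod 2) × Multiplicative (ZMod 2) × Multiplicative (ZMod 2)) ∧
    Subgroup.centralizer
        ((P : Subgroup (Matrix.SpecialLinearGroup (Fin 2) F)) :
          Set (Matrix.SpecialLinearGroup (Fin 2) F)) =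
      (P : Subgroup (Matrix.SpecialLinearGroup (Fin 2) F)) ∧
    Nonempty
      (((Subgroup.normalizer ((P : Subgroup (Matrix.SpecialLinearGroup (Fin 2) F)) :
            Set (Matrix.SpecialLinearGroup (Fin 2) F))) ⧸
          (P : Subgroup (Matrix.SpecialLinearGroup (Fin 2) F)).subgroupOf
            (Subgroup.normalizer ((P : Subgroup (Matrix.SpecialLinearGroup (Fin 2) F)) :
            Set (Matrix.SpecialLinearGroup (Fin 2) F)))) ≃*
        Multiplicative (ZMod 7)) := by
  have : CharP F 2 := charP_of_card_eq_prime_pow (f := 3) hF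
  let U := unipotentSylow (F := F) 2
  refine ⟨?_, P.centralizer_eq_self_of_eq U centralizer_unipotent, ?_⟩
  · let := (ZMod.algebra F 2).toModule
    obtain ⟨e⟩ := Module.nonempty_linearEquiv_of_natCard_eq (ZMod 2) F (ZMod 2 × ZMod 2 × ZMod 2)
      (by simp [Nat.card_eq_fintype_card, hF])
    exact ⟨(P.equiv U).trans <| unipotentEquiv.trans <|
      (AddEquiv.toMultiplicative e.toAddEquiv).trans <| (MulEquiv.prodMultiplicative _ _).trans <|
        .prodCongr (.refl _) (.prodMultiplicative _ _)⟩
  · have h7 : (P : Subgroup SL(2, F)).relIndex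
        (normalizer ((P : Subgroup SL(2, F)) : Set SL(2, F))) = 7 := by
      rw [P.relIndex_normalizer_eq U]
      exact (relIndex_unipotent_normalizer).trans (by simp [Nat.card_eq_fintype_card, hF])
    have : Fact (Nat.Prime 7) := ⟨by norm_num⟩
    exact ⟨mulEquivOfPrimeCardEq h7 (by simp)⟩
end
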